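/- Let A ∈ ℂ^{n×m} be nonzero with Gram matrix G = A*A, largest singular value σ_1, and let v_1 be a unit eigenvector of G with eigenvalue σ_1². Fix a column index c with A e_c ≠ 0 and v_1* e_c = 0. For each row index i with A_{ic} ≠ 0, let A^{(1)}(i,c) = A − (1/A_{ic}) A e_c e_i^T A and G^{(1)}(i,c) = A^{(1)}(i,c)* A^{(1)}(i,c). Then Σ_{i: A_{ic} ≠ 0} (|A_{ic}|²/‖A e_c‖₂²) · v_1* G^{(1)}(i,c) v_1 ≤ 2 σ_1². -/

import Mathlib

/-!
Write `u = A v₁` and `a = A e_c`. The residual acts by `A¹(i,c) v₁ = u - (u_i / a_i) a`, and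
`a* u = (G v₁)_c = σ₁² (v₁)_c = 0`, so by Pythagoras
`v₁* G¹(i,c) v₁ = ‖u‖² + |u_i|² / |a_i|² · ‖a‖²`. Averaging against the pivot weights
`|a_i|² / ‖a‖²` cancels the denominators, leaving at most `‖u‖² + ∑ᵢ |u_i|² ≤ 2 ‖u‖² ≤ 2 σ₁²`.
-/

open Matrix Finset

section Vectors

variable {𝕜 : Type*} [RCLike 𝕜] {ι : Type*} [Fintype ι]

lemma re_star_dotProduct_self (w : ι → 𝕜) : RCLike.re (star w ⬝ᵥ w) = ∑ a, ‖w a‖ ^ 2 := by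
  simp only [dotProduct, Pi.star_apply, RCLike.star_def, RCLike.conj_mul, ← RCLike.ofReal_pow,
    ← RCLike.ofReal_sum, RCLike.ofReal_re]

lemma sum_norm_sq_sub_smul_of_orthogonal {x y : ι → 𝕜} (h : star x ⬝ᵥ y = 0) (k : 𝕜) :
    ∑ a, ‖(y - k • x) a‖ ^ 2 = ∑ a, ‖y a‖ ^ 2 + ‖k‖ ^ 2 * ∑ a, ‖x a‖ ^ 2 := by
  have horth : inner 𝕜 (WithLp.toLp 2 y) (WithLp.toLp 2 (k • x)) = 0 := by
    rw [EuclideanSpace.inner_toLp_toLp, dotProduct_comm, dotProduct_smul, star_dotProduct, h]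
    simp
  have := @norm_sub_sq 𝕜 _ _ _ _ (WithLp.toLp 2 y) (WithLp.toLp 2 (k • x))
  simp only [horth, map_zero, mul_zero, sub_zero, ← WithLp.toLp_sub, EuclideanSpace.norm_sq_eq]
    at this
  simpa [norm_mul, mul_pow, ← Finset.mul_sum] using this

end Vectors

namespace Matrix

variable {𝕜 : Type*} [RCLike 𝕜] {ι κ : Type*} [Fintype ι] [Fintype κ]

noncomputable def pivotResidual [DecidableEq ι] [DecidableEq κ] (A : Matrix ι κ 𝕜) (i : ι)
    (c : κ) : Matrix ι κ 𝕜 :=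
  A - (A i c)⁻¹ • (A * single c i (1 : 𝕜) * A)

lemma re_star_dotProduct_conjTranspose_mul_self_mulVec (B : Matrix ι κ 𝕜) (v : κ → 𝕜) :
    RCLike.re (star v ⬝ᵥ ((Bᴴ * B) *ᵥ v)) = ∑ a, ‖(B *ᵥ v) a‖ ^ 2 := by
  rw [← mulVec_mulVec, dotProduct_mulVec, ← star_mulVec, re_star_dotProduct_self]

lemma star_col_dotProduct_mulVec (A : Matrix ι κ 𝕜) (v : κ → 𝕜) (c : κ) :
    star (A.col c) ⬝ᵥ (A *ᵥ v) = ((Aᴴ * A) *ᵥ v) c := by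
  rw [← mulVec_mulVec]
  rfl

lemma pivotResidual_mulVec [DecidableEq ι] [DecidableEq κ] (A : Matrix ι κ 𝕜) (i : ι) (c : κ)
    (v : κ → 𝕜) :
    A.pivotResidual i c *ᵥ v = A *ᵥ v - ((A i c)⁻¹ * (A *ᵥ v) i) • A.col c := by
  have hrankOne : (A * single c i (1 : 𝕜) * A) *ᵥ v = (A *ᵥ v) i • A.col c := by
    rw [← mulVec_mulVec, ← mulVec_mulVec, single_mulVec, one_mul]
    ext a
    exact (dotProduct_single (A a) _ _).trans (mul_comm _ _)
  rw [pivotResidual, sub_mulVec, smul_mulVec, hrankOne, smul_smul]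

lemma re_star_dotProduct_gram_pivotResidual_mulVec [DecidableEq ι] [DecidableEq κ]
    {A : Matrix ι κ 𝕜} {v : κ → 𝕜} {c : κ} (h : star (A.col c) ⬝ᵥ (A *ᵥ v) = 0) (i : ι) :
    RCLike.re (star v ⬝ᵥ (((A.pivotResidual i c)ᴴ * A.pivotResidual i c) *ᵥ v)) =
      ∑ a, ‖(A *ᵥ v) a‖ ^ 2 + ‖(A *ᵥ v) i‖ ^ 2 / ‖A i c‖ ^ 2 * ∑ a, ‖A a c‖ ^ 2 := by
  rw [re_star_dotProduct_conjTranspose_mul_self_mulVec, pivotResidual_mulVec,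
    sum_norm_sq_sub_smul_of_orthogonal h, norm_mul, norm_inv, mul_pow, inv_pow, inv_mul_eq_div]
  rfl

end Matrix

lemma Finset.sum_div_sum_mul_add_div_mul_sum_le {ι : Type*} [Fintype ι] (s : Finset ι)
    {x y : ι → ℝ} (hx : ∀ i, 0 ≤ x i) (hy : ∀ i, 0 ≤ y i) (hs : ∀ i ∈ s, x i ≠ 0) :
    ∑ i ∈ s, (x i / ∑ j, x j) * (∑ j, y j + y i / x i * ∑ j, x j) ≤ 2 * ∑ j, y j := by
  have hterm : ∀ i ∈ s, (x i / ∑ j, x j) * (∑ j, y j + y i / x i * ∑ j, x j) =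
      (x i / ∑ j, x j) * ∑ j, y j + y i := by
    intro i hi
    have hxi : 0 < x i := (hx i).lt_of_ne' (hs i hi)
    have hX : (∑ j, x j) ≠ 0 := (hxi.trans_le (single_le_sum (fun j _ => hx j) (mem_univ i))).ne'
    field_simp
  have hxs : (∑ i ∈ s, x i) / ∑ j, x j ≤ 1 :=
    div_le_one_of_le₀ (sum_le_univ_sum_of_nonneg hx) (sum_nonneg fun j _ => hx j)
  calc _ = (∑ i ∈ s, x i) / (∑ j, x j) * ∑ j, y j + ∑ i ∈ s, y i := by
        rw [sum_congr rfl hterm, sum_add_distrib, ← sum_mul, ← sum_div]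
    _ ≤ 1 * ∑ j, y j + ∑ j, y j :=
        add_le_add (mul_le_mul_of_nonneg_right hxs (sum_nonneg fun j _ => hy j))
          (sum_le_univ_sum_of_nonneg hy)
    _ = 2 * ∑ j, y j := by ring

theorem rplu_case1_bound_general {n m : ℕ} (A : Matrix (Fin n) (Fin m) ℂ)
    (σ1 : ℝ)
    (hop : ∀ w : Fin m → ℂ, (∑ a, ‖A.mulVec w a‖ ^ 2) ≤ σ1 ^ 2 * ∑ t, ‖w t‖ ^ 2)
    (v1 : Fin m → ℂ) (hv1unit : (∑ t, ‖v1 t‖ ^ 2) = 1)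
    (heig : (Aᴴ * A).mulVec v1 = ((σ1 : ℂ) ^ 2) • v1)
    (c : Fin m)
    (hvc : v1 c = 0) :
    (∑ i ∈ Finset.univ.filter (fun i : Fin n => A i c ≠ 0),
        (‖A i c‖ ^ 2 / ∑ a, ‖A a c‖ ^ 2) *
          (dotProduct (star v1)
            (((A - (A i c)⁻¹ • (A * Matrix.single c i (1 : ℂ) * A))ᴴ *
                (A - (A i c)⁻¹ • (A * Matrix.single c i (1 : ℂ) * A))).mulVec
              v1)).re)
      ≤ 2 * σ1 ^ 2 := by
  have horth : star (A.col c) ⬝ᵥ (A *ᵥ v1) = 0 := by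
    rw [star_col_dotProduct_mulVec, heig, Pi.smul_apply, hvc, smul_zero]
  have hAv : ∑ a, ‖(A *ᵥ v1) a‖ ^ 2 ≤ σ1 ^ 2 := by simpa [hv1unit] using hop v1
  calc _ = ∑ i ∈ Finset.univ.filter (fun i : Fin n => A i c ≠ 0),
          (‖A i c‖ ^ 2 / ∑ a, ‖A a c‖ ^ 2) *
            (∑ a, ‖(A *ᵥ v1) a‖ ^ 2 + ‖(A *ᵥ v1) i‖ ^ 2 / ‖A i c‖ ^ 2 * ∑ a, ‖A a c‖ ^ 2) :=
        sum_congr rfl fun i _ => congrArg _ (re_star_dotProduct_gram_pivotResidual_mulVec horth i)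
    _ ≤ 2 * ∑ a, ‖(A *ᵥ v1) a‖ ^ 2 :=
        sum_div_sum_mul_add_div_mul_sum_le _ (fun _ => by positivity) (fun _ => by positivity)
          fun i hi => by simpa using (mem_filter.mp hi).2
    _ ≤ 2 * σ1 ^ 2 := by linarith

/-- **Theorem (case 1 bound in the RPLU doubling proof).**
Let `A ∈ ℂ^{n×m}` be nonzero, `G = AᴴA`, `σ₁` the largest singular value of `A`
(so `∑ₐ‖(Aw)ₐ‖² ≤ σ₁² ∑ₜ‖wₜ‖²` for all `w`), and `v₁` a unit eigenvector of `G` with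
eigenvalue `σ₁²`.  Fix a column `c` with `A e_c ≠ 0` and `v₁ᴴ e_c = 0`.  With
`A¹(i,c) = A − A_{ic}⁻¹ A e_c e_iᵀ A` and `G¹(i,c) = A¹(i,c)ᴴ A¹(i,c)`, the expectation
over the row pivot `i ∼ |A_{ic}|²/‖A e_c‖₂²` satisfies `𝔼[v₁ᴴ G¹ v₁] ≤ 2 σ₁²`. -/
theorem rplu_case1_bound {n m : ℕ} (A : Matrix (Fin n) (Fin m) ℂ) (hA : A ≠ 0)
    (σ1 : ℝ) (hσ1 : 0 ≤ σ1)
    (hop : ∀ w : Fin m → ℂ, (∑ a, ‖A.mulVec w a‖ ^ 2) ≤ σ1 ^ 2 * ∑ t, ‖w t‖ ^ 2)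
    (v1 : Fin m → ℂ) (hv1unit : (∑ t, ‖v1 t‖ ^ 2) = 1)
    (heig : (Aᴴ * A).mulVec v1 = ((σ1 : ℂ) ^ 2) • v1)
    (c : Fin m) (hAc : A.mulVec (Pi.single c 1) ≠ 0)
    (hvc : v1 c = 0) :
    (∑ i ∈ Finset.univ.filter (fun i : Fin n => A i c ≠ 0),
        (‖A i c‖ ^ 2 / ∑ a, ‖A a c‖ ^ 2) *
          (dotProduct (star v1)
            (((A - (A i c)⁻¹ • (A * Matrix.single c i (1 : ℂ) * A))ᴴ *
                (A - (A i c)⁻¹ • (A * Matrix.single c i (1 : ℂ) * A))).mulVec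
              v1)).re)
      ≤ 2 * σ1 ^ 2 :=
  rplu_case1_bound_general A σ1 hop v1 hv1unit heig c hvc
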